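/- arXiv:1001.4170 — 2 statements merged into one kernel-verified Lean document; each statement's English description precedes it below -/
import Mathlib

section
/- Let u = 2^{n_1+1}(2^{k_1} − 1) + 2^{n_1} − 1 and v = 2^{n_2+1}(2^{k_2} − 1) + 2^{n_2} − 1 with n_1 ≥ k_1 + 2, n_2 ≥ k_2 + 2, k_1 ≥ k_2, n_2 > k_1 + 1, and n_1 = n_2 + k_2 + 1. Then s_2(u·v) = n_2 + 1. -/
/-! Write `k₁ = k₂ + e` and `n₂ = k₁ + c + 2`. The product `u * v` then has the sparse binary
expansion
  `1 + 2^n₂ (1 + 2^(2k₂+e+2) ((2^(c+1) - 1) + 2^(c+k₂+2) ((2^e - 1) + 2^(e+1) (2^k₂ - 1))))`,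
whose blocks do not overlap, so its digit sum is `1 + 1 + (c + 1) + e + k₂ = n₂ + 1`. -/

namespace Nat

theorem digits_base_pow_sub_one {b : ℕ} (hb : 1 < b) (n : ℕ) :
    b.digits (b ^ n - 1) = List.replicate n (b - 1) := by
  induction n with
  | zero => simp
  | succ n ih =>
    have hpos : 0 < b ^ n := by positivity
    have hsplit : b ^ (n + 1) - 1 = (b - 1) + b * (b ^ n - 1) := by
      have : b ≤ b * b ^ n := Nat.le_mul_of_pos_right b hpos
      rw [pow_succ', Nat.mul_sub_one]; omega
    rw [hsplit, digits_add b hb _ _ (by omega) (by omega), ih, List.replicate_succ]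

theorem digits_sum_add_base_pow_mul {b t n : ℕ} (hb : 1 < b) (hn : n < b ^ t) (m : ℕ) :
    (b.digits (n + b ^ t * m)).sum = (b.digits n).sum + (b.digits m).sum := by
  rcases m.eq_zero_or_pos with rfl | hm
  · simp
  obtain ⟨k, rfl⟩ := Nat.exists_eq_add_of_le ((digits_length_le_iff hb n).2 hn)
  rw [← digits_append_zeroes_append_digits hb hm]
  simp

theorem digits_sum_base_pow_mul {b : ℕ} (hb : 1 < b) (t m : ℕ) :
    (b.digits (b ^ t * m)).sum = (b.digits m).sum := by
  simpa using digits_sum_add_base_pow_mul hb (pow_pos (zero_lt_of_lt hb) t) m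

theorem digits_two_sum_two_pow_sub_one (n : ℕ) : (digits 2 (2 ^ n - 1)).sum = n := by
  simp [digits_base_pow_sub_one one_lt_two]

end Nat

/-- The number with binary representation `1^(k) 0 1^(n)`. -/
def onesZeroOnes (k n : ℕ) : ℕ := 2 ^ (n + 1) * (2 ^ k - 1) + 2 ^ n - 1

theorem onesZeroOnes_mul_onesZeroOnes {b e c n : ℕ} (hn : n = b + e + c + 2) :
    onesZeroOnes (b + e) (n + b + 1) * onesZeroOnes b n =
      1 + 2 ^ n * (1 + 2 ^ (b + e + b + 2) *
        ((2 ^ (c + 1) - 1) + 2 ^ (c + 1) * (2 ^ (b + 1) *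
          ((2 ^ e - 1) + 2 ^ (e + 1) * (2 ^ b - 1))))) := by
  subst hn
  unfold onesZeroOnes
  have h {m : ℕ} : 1 ≤ 2 ^ m := Nat.one_le_two_pow
  have hu : 1 ≤ 2 ^ (b + e + c + 2 + b + 1 + 1) * (2 ^ (b + e) - 1) +
      2 ^ (b + e + c + 2 + b + 1) := le_add_left h
  have hv : 1 ≤ 2 ^ (b + e + c + 2 + 1) * (2 ^ b - 1) + 2 ^ (b + e + c + 2) := le_add_left h
  zify [h, hu, hv]
  ring

theorem uv_digit_sum_case2_general (k₁ k₂ n₁ n₂ : ℕ)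
    (h3 : k₂ ≤ k₁) (h4 : k₁ + 1 < n₂)
    (h5 : n₁ = n₂ + k₂ + 1) :
    (Nat.digits 2 ((2 ^ (n₁ + 1) * (2 ^ k₁ - 1) + 2 ^ n₁ - 1) *
      (2 ^ (n₂ + 1) * (2 ^ k₂ - 1) + 2 ^ n₂ - 1))).sum = n₂ + 1 := by
  obtain ⟨e, rfl⟩ := Nat.exists_eq_add_of_le h3
  obtain ⟨c, hc⟩ : ∃ c, n₂ = k₂ + e + c + 2 := ⟨n₂ - (k₂ + e) - 2, by omega⟩
  subst h5
  change (Nat.digits 2 (onesZeroOnes (k₂ + e) (n₂ + k₂ + 1) * onesZeroOnes k₂ n₂)).sum = _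
  have h2 {m : ℕ} : 2 ^ m - 1 < 2 ^ m := Nat.sub_one_lt (by positivity)
  rw [onesZeroOnes_mul_onesZeroOnes hc,
    Nat.digits_sum_add_base_pow_mul one_lt_two (Nat.one_lt_two_pow (by omega)),
    Nat.digits_sum_add_base_pow_mul one_lt_two (Nat.one_lt_two_pow (by omega)),
    Nat.digits_sum_add_base_pow_mul one_lt_two h2,
    Nat.digits_sum_base_pow_mul one_lt_two,
    Nat.digits_sum_add_base_pow_mul one_lt_two
      (h2.trans (pow_lt_pow_right₀ one_lt_two e.lt_succ_self)),
    Nat.digits_two_sum_two_pow_sub_one, Nat.digits_two_sum_two_pow_sub_one,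
    Nat.digits_two_sum_two_pow_sub_one, Nat.digits_of_lt 2 1 one_ne_zero one_lt_two,
    List.sum_singleton]
  omega

theorem uv_digit_sum_case2 (k₁ k₂ n₁ n₂ : ℕ)
    (h1 : k₁ + 2 ≤ n₁) (h2 : k₂ + 2 ≤ n₂) (h3 : k₂ ≤ k₁) (h4 : k₁ + 1 < n₂)
    (h5 : n₁ = n₂ + k₂ + 1) :
    (Nat.digits 2 ((2 ^ (n₁ + 1) * (2 ^ k₁ - 1) + 2 ^ n₁ - 1) *
      (2 ^ (n₂ + 1) * (2 ^ k₂ - 1) + 2 ^ n₂ - 1))).sum = n₂ + 1 :=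
  uv_digit_sum_case2_general k₁ k₂ n₁ n₂ h3 h4 h5
end

section
/- Let q ≥ 3 and let u be the integer with base-q representation consisting of k digits equal to q−1, then a 0, then n digits equal to q−1, then a final digit e (i.e., u = e + (q^n − 1)q + (q^k − 1)q^{n+2}) with k ≥ 2, n ≥ k + 2, and 0 ≤ e ≤ q − 2. Then s_q(u) = (q−1)(n+k) + e and s_q(u^2) = (q−1)(n+1) + f(q,e), where f(q,e) = s_q((q−e)^2) + s_q(2(q−1)(q−e)) − s_q(2(q−e) − 1). -/
/-!
With `m = q - e` the number is `u = q ^ (n+1) * (q ^ (k+1) - q + 1) - m`, so `u ^ 2` is the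
carry-free juxtaposition of four base-`q` blocks: `m ^ 2`, then `2 (q-1) m`, then `q ^ (n-k) - 2m`,
then `(q-2) q + (q ^ (k+1) - (2q - 2)) q ^ (k+1)`. Digit sums add over such blocks, and for
`1 ≤ x ≤ q ^ t` one has `s_q(q ^ t - x) = t (q-1) - s_q(x - 1)`, since subtracting `x - 1` from
`q ^ t - 1` never borrows. This evaluates the last two blocks.
-/

namespace Nat

variable {b : ℕ}

theorem digits_sum_of_lt {d : ℕ} (hd : d < b) : (b.digits d).sum = d := by
  rcases d.eq_zero_or_pos with rfl | hd0
  · simp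
  · simp [digits_of_lt b d hd0.ne' hd]

theorem digits_sum_add_mul_pow (hb : 1 < b) {t a : ℕ} (c : ℕ) (ha : a < b ^ t) :
    (b.digits (a + c * b ^ t)).sum = (b.digits a).sum + (b.digits c).sum := by
  rcases c.eq_zero_or_pos with rfl | hc
  · simp
  have hlen := (digits_length_le_iff hb a).2 ha
  rw [mul_comm, ← Nat.add_sub_cancel' hlen, ← digits_append_zeroes_append_digits hb hc]
  simp

theorem add_mul_pow_lt_pow_add {s t a c : ℕ} (ha : a < b ^ s) (hc : c < b ^ t) :
    a + c * b ^ s < b ^ (s + t) :=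
  calc a + c * b ^ s < (c + 1) * b ^ s := by linarith
    _ ≤ b ^ t * b ^ s := Nat.mul_le_mul_right _ hc
    _ = b ^ (s + t) := by rw [pow_add, mul_comm]

theorem digits_sum_pow_sub_one_sub_add (hb : 1 < b) {t y : ℕ} (hy : y < b ^ t) :
    (b.digits (b ^ t - 1 - y)).sum + (b.digits y).sum = t * (b - 1) := by
  induction t generalizing y with
  | zero => simp_all
  | succ t ih =>
    set d := y % b
    set y' := y / b
    have hd : d < b := Nat.mod_lt _ (by omega)
    have hy' : y' < b ^ t := Nat.div_lt_of_lt_mul (by rwa [← pow_succ'])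
    have hsplit : y = d + y' * b ^ 1 := by rw [pow_one, Nat.mod_add_div']
    have hcompl : b ^ (t + 1) - 1 - y = (b - 1 - d) + (b ^ t - 1 - y') * b ^ 1 := by
      obtain ⟨z, hz⟩ : ∃ z, b ^ t = y' + 1 + z := ⟨b ^ t - 1 - y', by omega⟩
      rw [pow_succ, hz, show y' + 1 + z - 1 - y' = z by omega, hsplit, pow_one, add_mul, add_mul,
        one_mul]
      omega
    rw [hcompl, digits_sum_add_mul_pow hb _ (by rw [pow_one]; omega), hsplit,
      digits_sum_add_mul_pow hb _ (by rwa [pow_one]), digits_sum_of_lt (by omega),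
      digits_sum_of_lt hd, add_one_mul, ← ih hy']
    omega

theorem digits_sum_pow_sub_one (hb : 1 < b) (t : ℕ) :
    (b.digits (b ^ t - 1)).sum = t * (b - 1) := by
  simpa using digits_sum_pow_sub_one_sub_add hb (y := 0) (t := t) (by positivity)

theorem digits_sum_pow_sub_add (hb : 1 < b) {t x : ℕ} (hx : 0 < x) (hxt : x ≤ b ^ t) :
    (b.digits (b ^ t - x)).sum + (b.digits (x - 1)).sum = t * (b - 1) := by
  rw [← digits_sum_pow_sub_one_sub_add hb (y := x - 1) (by omega)]
  congr 3
  omega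

end Nat

open Nat

section Block

variable {q : ℕ}

def blockNum (q e n k : ℕ) : ℕ := e + (q ^ n - 1) * q + (q ^ k - 1) * q ^ (n + 2)

theorem digits_sum_blockNum (hq : 1 < q) {e : ℕ} (he : e < q) (n k : ℕ) :
    (q.digits (blockNum q e n k)).sum = (q - 1) * (n + k) + e := by
  have hn : q ^ n - 1 < q ^ (n + 1) :=
    (Nat.sub_le _ _).trans_lt (Nat.pow_lt_pow_right hq (by omega))
  have hsplit : e + (q ^ n - 1) * q + (q ^ k - 1) * q ^ (n + 2)
      = e + ((q ^ n - 1) + (q ^ k - 1) * q ^ (n + 1)) * q ^ 1 := by ring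
  rw [blockNum, hsplit, digits_sum_add_mul_pow hq _ (by rwa [pow_one]),
    digits_sum_add_mul_pow hq _ hn, digits_sum_pow_sub_one hq, digits_sum_pow_sub_one hq,
    digits_sum_of_lt he]
  ring

theorem digits_sum_two_mul_sub_three (hq : 3 ≤ q) : (q.digits (2 * q - 3)).sum = q - 2 := by
  rw [show 2 * q - 3 = (q - 3) + 1 * q ^ 1 by rw [pow_one]; omega,
    digits_sum_add_mul_pow (by omega) _ (by rw [pow_one]; omega),
    digits_sum_of_lt (by omega), digits_sum_of_lt (by omega)]
  omega

theorem digits_sum_high_block (hq : 3 ≤ q) {k : ℕ} (hk : 1 ≤ k) :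
    (q.digits ((q - 2) * q + (q ^ (k + 1) - (2 * q - 2)) * q ^ (k + 1))).sum
      = (k + 1) * (q - 1) := by
  have hq2 : q * q ≤ q ^ (k + 1) := by
    rw [← sq]; exact Nat.pow_le_pow_right (by omega) (by omega)
  have h2q : 2 * q ≤ q * q := Nat.mul_le_mul_right q (by omega)
  have hlow : (q - 2) * q < q * q := Nat.mul_lt_mul_of_lt_of_le (by omega) le_rfl (by omega)
  have hcompl :=
    digits_sum_pow_sub_add (by omega : 1 < q) (t := k + 1) (x := 2 * q - 2) (by omega) (by omega)
  rw [show 2 * q - 2 - 1 = 2 * q - 3 by omega, digits_sum_two_mul_sub_three hq] at hcompl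
  rw [digits_sum_add_mul_pow (by omega) _ (by omega),
    show (q - 2) * q = 0 + (q - 2) * q ^ 1 by ring,
    digits_sum_add_mul_pow (by omega) _ (by rw [pow_one]; omega), Nat.digits_zero, List.sum_nil,
    digits_sum_of_lt (show q - 2 < q by omega)]
  omega

theorem blockNum_sq_eq (hq : 2 ≤ q) {e m k t : ℕ} (hem : e + m = q) (hk : 1 ≤ k)
    (hm : 2 * m ≤ q ^ t) :
    blockNum q e (k + t) k ^ 2
      = (m ^ 2 + 2 * (q - 1) * m * q ^ (k + t + 1))
        + ((q ^ t - 2 * m) + ((q - 2) * q + (q ^ (k + 1) - (2 * q - 2)) * q ^ (k + 1)) * q ^ t)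
          * q ^ ((k + t + 1) + (k + 1)) := by
  have hq2 : q * q ≤ q ^ (k + 1) := by
    rw [← sq]; exact Nat.pow_le_pow_right (by omega) (by omega)
  have h2q : 2 * q ≤ q * q := Nat.mul_le_mul_right q (by omega)
  have h1 : 1 ≤ q ^ (k + t) := Nat.one_le_pow _ _ (by omega)
  have h2 : 1 ≤ q ^ k := Nat.one_le_pow _ _ (by omega)
  obtain rfl : e = q - m := by omega
  rw [blockNum]
  zify [h1, h2, hm, (by omega : 2 * q - 2 ≤ q ^ (k + 1)), (by omega : m ≤ q),
    (by omega : 2 ≤ q), (by omega : 1 ≤ q), (by omega : 2 ≤ 2 * q)]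
  ring

theorem digits_sum_blockNum_sq_add (hq : 3 ≤ q) {e m k t : ℕ} (hem : e + m = q) (hm : 1 ≤ m)
    (hk : 2 ≤ k) (ht : 2 ≤ t) :
    (q.digits (blockNum q e (k + t) k ^ 2)).sum + (q.digits (2 * m - 1)).sum
      = (q.digits (m ^ 2)).sum + (q.digits (2 * (q - 1) * m)).sum + (q - 1) * (k + t + 1) := by
  have hq1 : 1 < q := by omega
  have hqq : q * q ≤ q ^ t := by rw [← sq]; exact Nat.pow_le_pow_right (by omega) ht
  have hm2 : 2 * m ≤ q ^ t := by nlinarith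
  have hmsq : m ^ 2 < q ^ (k + t + 1) :=
    (Nat.pow_le_pow_left (by omega : m ≤ q) 2).trans_lt (Nat.pow_lt_pow_right hq1 (by omega))
  have hmid : 2 * (q - 1) * m < q ^ (k + 1) := by
    have : q ^ 3 ≤ q ^ (k + 1) := Nat.pow_le_pow_right (by omega) (by omega)
    have : 2 * (q - 1) * m ≤ 2 * (q - 1) * q := Nat.mul_le_mul_left _ (by omega)
    have : 2 * (q - 1) * q < q ^ 3 := by
      obtain ⟨r, rfl⟩ : ∃ r, q = r + 1 := ⟨q - 1, by omega⟩
      simp only [Nat.add_sub_cancel]; nlinarith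
    omega
  have hcompl := digits_sum_pow_sub_add hq1 (by omega : 0 < 2 * m) hm2
  rw [blockNum_sq_eq (by omega) hem (by omega) hm2,
    digits_sum_add_mul_pow hq1 _ (add_mul_pow_lt_pow_add hmsq hmid),
    digits_sum_add_mul_pow hq1 _ hmsq, digits_sum_add_mul_pow hq1 _ (by omega),
    digits_sum_high_block hq (by omega)]
  have : (q - 1) * (k + t + 1) = t * (q - 1) + (k + 1) * (q - 1) := by ring
  omega

end Block

theorem base_q_block_lemma (q k n e : ℕ) (hq : 3 ≤ q) (hk : 2 ≤ k)
    (hn : k + 2 ≤ n) (he : e ≤ q - 2) :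
    (Nat.digits q (e + (q ^ n - 1) * q + (q ^ k - 1) * q ^ (n + 2))).sum
      = (q - 1) * (n + k) + e ∧
    ((Nat.digits q ((e + (q ^ n - 1) * q + (q ^ k - 1) * q ^ (n + 2)) ^ 2)).sum : ℤ)
      = (q - 1) * (n + 1) +
        ((Nat.digits q ((q - e) ^ 2)).sum + (Nat.digits q (2 * (q - 1) * (q - e))).sum
          - ((Nat.digits q (2 * (q - e) - 1)).sum : ℤ)) := by
  refine ⟨digits_sum_blockNum (by omega) (by omega) n k, ?_⟩
  obtain ⟨t, rfl⟩ : ∃ t, n = k + t := ⟨n - k, by omega⟩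
  have h := congrArg (Nat.cast : ℕ → ℤ) <|
    digits_sum_blockNum_sq_add hq (e := e) (m := q - e) (t := t) (by omega) (by omega) hk (by omega)
  simp only [blockNum, Nat.cast_add, Nat.cast_mul, Nat.cast_one,
    Nat.cast_sub (by omega : 1 ≤ q)] at h
  rw [Nat.cast_add]
  linarith
end
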